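/- arXiv:2010.01911 — 7 statements merged into one kernel-verified Lean document; each statement's English description precedes it below -/
import Mathlib

section
/- Let n ≥ 3 be an integer, ℓ > 0, r₀ > 0, a ∈ ℝ, r₊ > 0, and define V : (0,∞) → ℝ by V(r) = (r²/ℓ²)(1 + a/r^{n−1} − r₀ⁿ/rⁿ), assumed positive on (r₊,∞). Let N : (r₊,∞) × ℝ × ℝ^{n−2} → ℝ, (r, φ, θ¹, …, θ^{n−2}) ↦ N(r, φ, θ), be smooth, periodic in φ with period β > 0 and periodic in each θⁱ with period λᵢ > 0. Suppose that for all points of the domain: ∂_r∂_φ(V^{−1/2}N) = 0, ∂_r∂_{θⁱ}(r^{−1}N) = 0 for all i, ∂_φ∂_{θⁱ}N = 0 for all i, and ∂_{θⁱ}∂_{θʲ}N = 0 for all i ≠ j. Then there exist a smooth function k on (r₊,∞), a smooth β-periodic function h on ℝ, and smooth λᵢ-periodic functions fᵢ on ℝ (1 ≤ i ≤ n−2) such that N(r, φ, θ) = k(r) + V(r)^{1/2}·h(φ) + r·Σ_{i=1}^{n−2} fᵢ(θⁱ). -/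
open scoped BigOperators

/-- Claim 1 of the uniqueness theorem: a smooth lapse
N(r, φ, θ), periodic in φ (period β) and in each θⁱ (period λᵢ), whose mixed
second partials ∂_r∂_φ(V^{−1/2}N), ∂_r∂_{θⁱ}(r⁻¹N), ∂_φ∂_{θⁱ}N and
∂_{θⁱ}∂_{θʲ}N (i ≠ j) all vanish on (r₊,∞) × ℝ × ℝ^{n−2}, decomposes as
N = k(r) + V(r)^{1/2} h(φ) + r Σᵢ fᵢ(θⁱ) with h and the fᵢ periodic. -/
theorem stmt_4 (n : ℕ) (hn : 3 ≤ n) (ℓ r₀ : ℝ) (hℓ : 0 < ℓ) (hr₀ : 0 < r₀) (a : ℝ)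
    (rp : ℝ) (hrp : 0 < rp)
    (V : ℝ → ℝ)
    (hV : ∀ r > (0 : ℝ), V r = r ^ 2 / ℓ ^ 2 * (1 + a / r ^ (n - 1) - r₀ ^ n / r ^ n))
    (hVpos : ∀ r > rp, 0 < V r)
    (β : ℝ) (hβ : 0 < β) (lam : Fin (n - 2) → ℝ) (hlam : ∀ i, 0 < lam i)
    (N : ℝ → ℝ → (Fin (n - 2) → ℝ) → ℝ)
    (hNsmooth : ContDiffOn ℝ (⊤ : ℕ∞) (fun p : ℝ × ℝ × (Fin (n - 2) → ℝ) => N p.1 p.2.1 p.2.2)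
      (Set.Ioi rp ×ˢ (Set.univ : Set (ℝ × (Fin (n - 2) → ℝ)))))
    (hNφ : ∀ r φ θ, N r (φ + β) θ = N r φ θ)
    (hNθ : ∀ r φ θ i, N r φ (Function.update θ i (θ i + lam i)) = N r φ θ)
    (hrφ : ∀ r > rp, ∀ φ θ,
      deriv (fun r' => deriv (fun φ' => (Real.sqrt (V r'))⁻¹ * N r' φ' θ) φ) r = 0)
    (hrθ : ∀ r > rp, ∀ φ θ i,
      deriv (fun r' => deriv (fun t => r'⁻¹ * N r' φ (Function.update θ i t)) (θ i)) r = 0)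
    (hφθ : ∀ r > rp, ∀ φ θ i,
      deriv (fun φ' => deriv (fun t => N r φ' (Function.update θ i t)) (θ i)) φ = 0)
    (hθθ : ∀ r > rp, ∀ φ θ, ∀ i j, i ≠ j →
      deriv (fun t => deriv (fun u =>
        N r φ (Function.update (Function.update θ i t) j u)) (θ j)) (θ i) = 0) :
    ∃ (k : ℝ → ℝ) (h : ℝ → ℝ) (f : Fin (n - 2) → ℝ → ℝ),
      ContDiffOn ℝ (⊤ : ℕ∞) k (Set.Ioi rp) ∧
      ContDiff ℝ (⊤ : ℕ∞) h ∧ Function.Periodic h β ∧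
      (∀ i, ContDiff ℝ (⊤ : ℕ∞) (f i) ∧ Function.Periodic (f i) (lam i)) ∧
      ∀ r > rp, ∀ φ θ,
        N r φ θ = k r + Real.sqrt (V r) * h φ + r * ∑ i, f i (θ i) := by
  classical
  set F : ℝ × ℝ × (Fin (n - 2) → ℝ) → ℝ := fun p => N p.1 p.2.1 p.2.2 with hFdef
  set Pφ : ℝ × ℝ × (Fin (n - 2) → ℝ) → ℝ :=
    fun p => fderiv ℝ F p (((0 : ℝ), (1 : ℝ), (0 : Fin (n - 2) → ℝ))) with hPφdef
  set Pθ : Fin (n - 2) → ℝ × ℝ × (Fin (n - 2) → ℝ) → ℝ :=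
    fun i p => fderiv ℝ F p (((0 : ℝ), (0 : ℝ), Pi.single i (1 : ℝ))) with hPθdef
  have hSopen : IsOpen (Set.Ioi rp ×ˢ (Set.univ : Set (ℝ × (Fin (n - 2) → ℝ)))) :=
    isOpen_Ioi.prod isOpen_univ
  have hmemS : ∀ (r : ℝ), rp < r → ∀ (φ : ℝ) (θ : Fin (n - 2) → ℝ),
      ((r, φ, θ) : ℝ × ℝ × (Fin (n - 2) → ℝ)) ∈
        (Set.Ioi rp ×ˢ (Set.univ : Set (ℝ × (Fin (n - 2) → ℝ)))) :=
    fun r hr φ θ => Set.mem_prod.mpr ⟨hr, trivial⟩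
  have hFat : ∀ (r : ℝ), rp < r → ∀ (φ : ℝ) (θ : Fin (n - 2) → ℝ),
      ContDiffAt ℝ (⊤ : ℕ∞) F (r, φ, θ) :=
    fun r hr φ θ => hNsmooth.contDiffAt (hSopen.mem_nhds (hmemS r hr φ θ))
  -- slice derivatives
  have hSφ : ∀ (r : ℝ), rp < r → ∀ (φ : ℝ) (θ : Fin (n - 2) → ℝ),
      HasDerivAt (fun φ' => N r φ' θ) (Pφ (r, φ, θ)) φ := by
    intro r hr φ θ
    have hc : HasDerivAt (fun φ' => ((r, φ', θ) : ℝ × ℝ × (Fin (n - 2) → ℝ)))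
        (((0 : ℝ), (1 : ℝ), (0 : Fin (n - 2) → ℝ))) φ :=
      (hasDerivAt_const φ r).prodMk ((hasDerivAt_id φ).prodMk (hasDerivAt_const φ θ))
    exact (((hFat r hr φ θ).differentiableAt (by simp)).hasFDerivAt).comp_hasDerivAt φ hc
  have hSθ : ∀ (r : ℝ), rp < r → ∀ (φ : ℝ) (θ : Fin (n - 2) → ℝ) (i : Fin (n - 2)) (t : ℝ),
      HasDerivAt (fun u => N r φ (Function.update θ i u))
        (Pθ i (r, φ, Function.update θ i t)) t := by
    intro r hr φ θ i t
    have hc : HasDerivAt (fun u => ((r, φ, Function.update θ i u) : ℝ × ℝ × (Fin (n - 2) → ℝ)))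
        (((0 : ℝ), (0 : ℝ), Pi.single i (1 : ℝ))) t :=
      (hasDerivAt_const t r).prodMk ((hasDerivAt_const t φ).prodMk (hasDerivAt_update θ i t))
    exact (((hFat r hr φ (Function.update θ i t)).differentiableAt (by simp)).hasFDerivAt).comp_hasDerivAt t hc
  -- smoothness of directional derivatives
  have hPat : ∀ (v : ℝ × ℝ × (Fin (n - 2) → ℝ)) (r : ℝ), rp < r →
      ∀ (φ : ℝ) (θ : Fin (n - 2) → ℝ),
      ContDiffAt ℝ (⊤ : ℕ∞) (fun p => fderiv ℝ F p v) (r, φ, θ) := by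
    intro v r hr φ θ
    have h1 : ContDiffAt ℝ (⊤ : ℕ∞) (fderiv ℝ F) (r, φ, θ) :=
      (hFat r hr φ θ).fderiv_right (m := (⊤ : ℕ∞)) (by simp)
    exact (ContinuousLinearMap.apply ℝ ℝ v).contDiff.contDiffAt.comp _ h1
  -- constancy helpers
  have constR : ∀ (f : ℝ → ℝ), (∀ t : ℝ, HasDerivAt f 0 t) → ∀ s t : ℝ, f s = f t := by
    intro f hf s t
    exact is_const_of_deriv_eq_zero (fun u => (hf u).differentiableAt)
      (fun u => (hf u).deriv) s t
  have constIoi : ∀ (f : ℝ → ℝ), (∀ x : ℝ, rp < x → HasDerivAt f 0 x) →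
      ∀ x : ℝ, rp < x → ∀ y : ℝ, rp < y → f x = f y := by
    intro f hf x hx y hy
    refine (convex_Ioi rp).is_const_of_fderivWithin_eq_zero
      (fun z hz => ((hf z hz).differentiableAt).differentiableWithinAt)
      (fun z hz => ?_) (Set.mem_Ioi.mpr hx) (Set.mem_Ioi.mpr hy)
    rw [((hf z hz).hasFDerivAt.hasFDerivWithinAt).fderivWithin (isOpen_Ioi.uniqueDiffOn z hz)]
    ext u
    simp
  -- fact 1 : Pθ j is invariant under changes of the i-th coordinate (i ≠ j)
  have fact1 : ∀ (r : ℝ), rp < r → ∀ (φ : ℝ) (i j : Fin (n - 2)), i ≠ j →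
      ∀ (θ : Fin (n - 2) → ℝ) (t s : ℝ),
      Pθ j (r, φ, Function.update θ i t) = Pθ j (r, φ, Function.update θ i s) := by
    intro r hr φ i j hij θ t s
    have hdiff : ∀ t : ℝ, DifferentiableAt ℝ
        (fun t' => Pθ j (r, φ, Function.update θ i t')) t := by
      intro t
      have hc : DifferentiableAt ℝ
          (fun t' => ((r, φ, Function.update θ i t') : ℝ × ℝ × (Fin (n - 2) → ℝ))) t :=
        ((hasDerivAt_const t r).prodMk
          ((hasDerivAt_const t φ).prodMk (hasDerivAt_update θ i t))).differentiableAt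
      exact (((hPat ((0 : ℝ), (0 : ℝ), Pi.single j (1 : ℝ)) r hr φ
        (Function.update θ i t)).differentiableAt (by simp))).comp t hc
    have hHas : ∀ t : ℝ, HasDerivAt (fun t' => Pθ j (r, φ, Function.update θ i t')) 0 t := by
      intro t
      have h0 := hθθ r hr φ (Function.update θ i t) i j hij
      simp only [Function.update_idem, Function.update_self,
        Function.update_of_ne (Ne.symm hij)] at h0
      have e : (fun t' => deriv
          (fun u => N r φ (Function.update (Function.update θ i t') j u)) (θ j))
          = fun t' => Pθ j (r, φ, Function.update θ i t') := by
        funext t'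
        rw [(hSθ r hr φ (Function.update θ i t') j (θ j)).deriv]
        have e2 : Function.update (Function.update θ i t') j (θ j)
            = Function.update θ i t' := by
          funext l
          rcases eq_or_ne l j with h | h
          · subst h
            simp [Function.update_apply, Ne.symm hij]
          · simp [Function.update_of_ne h]
        rw [e2]
      rw [e] at h0
      exact h0 ▸ (hdiff t).hasDerivAt
    exact constR _ hHas t s
  -- fact Z : Pθ j only depends on the j-th coordinate
  have factZ : ∀ (r : ℝ), rp < r → ∀ (φ : ℝ) (j : Fin (n - 2)) (χ : Fin (n - 2) → ℝ),
      Pθ j (r, φ, χ) = Pθ j (r, φ, Function.update (0 : Fin (n - 2) → ℝ) j (χ j)) := by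
    intro r hr φ j χ
    have key : ∀ s : Finset (Fin (n - 2)), j ∉ s →
        Pθ j (r, φ, χ) = Pθ j (r, φ, fun l => if l ∈ s then 0 else χ l) := by
      intro s
      induction s using Finset.induction_on with
      | empty => intro _; simp
      | @insert i s hi IH =>
        intro hins
        have hji : j ≠ i ∧ j ∉ s := by
          constructor
          · intro h; exact hins (h ▸ Finset.mem_insert_self i s)
          · intro h; exact hins (Finset.mem_insert_of_mem h)
        have hIH := IH hji.2
        have hstep := fact1 r hr φ i j (Ne.symm hji.1)
          (fun l => if l ∈ s then 0 else χ l)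
          ((fun l => if l ∈ s then 0 else χ l) i) 0
        have e1 : Function.update (fun l => if l ∈ s then 0 else χ l) i
            ((fun l => if l ∈ s then 0 else χ l) i) = fun l => if l ∈ s then 0 else χ l :=
          Function.update_eq_self i _
        have e2 : Function.update (fun l => if l ∈ s then 0 else χ l) i 0
            = fun l => if l ∈ insert i s then 0 else χ l := by
          funext l
          rcases eq_or_ne l i with h | h
          · subst h; simp [Function.update_self]
          · simp [Function.update_of_ne h, Finset.mem_insert, h]
        rw [e1, e2] at hstep
        rw [hIH, hstep]
    have h1 := key (Finset.univ.erase j) (Finset.notMem_erase j Finset.univ)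
    have h2 : (fun l => if l ∈ Finset.univ.erase j then 0 else χ l)
        = Function.update (0 : Fin (n - 2) → ℝ) j (χ j) := by
      funext l
      rcases eq_or_ne l j with h | h
      · subst h; simp
      · simp [Finset.mem_erase, h, Function.update_of_ne h]
    rw [h2] at h1
    exact h1
  have factD : ∀ (r : ℝ), rp < r → ∀ (φ : ℝ) (j : Fin (n - 2)) (χ χ' : Fin (n - 2) → ℝ),
      χ j = χ' j → Pθ j (r, φ, χ) = Pθ j (r, φ, χ') := by
    intro r hr φ j χ χ' h
    rw [factZ r hr φ j χ, factZ r hr φ j χ', h]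
  -- fact 2 : Pθ i is independent of φ
  have fact2 : ∀ (r : ℝ), rp < r → ∀ (i : Fin (n - 2)) (θ : Fin (n - 2) → ℝ) (φ φ' : ℝ),
      Pθ i (r, φ, θ) = Pθ i (r, φ', θ) := by
    intro r hr i θ φ φ'
    have hdiff : ∀ ψ : ℝ, DifferentiableAt ℝ (fun ψ' => Pθ i (r, ψ', θ)) ψ := by
      intro ψ
      have hc : DifferentiableAt ℝ
          (fun ψ' => ((r, ψ', θ) : ℝ × ℝ × (Fin (n - 2) → ℝ))) ψ :=
        ((hasDerivAt_const ψ r).prodMk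
          ((hasDerivAt_id ψ).prodMk (hasDerivAt_const ψ θ))).differentiableAt
      exact (((hPat ((0 : ℝ), (0 : ℝ), Pi.single i (1 : ℝ)) r hr ψ θ).differentiableAt
        (by simp))).comp ψ hc
    have hHas : ∀ ψ : ℝ, HasDerivAt (fun ψ' => Pθ i (r, ψ', θ)) 0 ψ := by
      intro ψ
      have h0 := hφθ r hr ψ θ i
      have e : (fun ψ' => deriv (fun t => N r ψ' (Function.update θ i t)) (θ i))
          = fun ψ' => Pθ i (r, ψ', θ) := by
        funext ψ'
        rw [(hSθ r hr ψ' θ i (θ i)).deriv, Function.update_eq_self]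
      rw [e] at h0
      exact h0 ▸ (hdiff ψ).hasDerivAt
    exact constR _ hHas φ φ'
  -- fact 3 : r⁻¹ Pθ i is independent of r
  have fact3 : ∀ (i : Fin (n - 2)) (φ : ℝ) (θ : Fin (n - 2) → ℝ) (x y : ℝ),
      rp < x → rp < y → x⁻¹ * Pθ i (x, φ, θ) = y⁻¹ * Pθ i (y, φ, θ) := by
    intro i φ θ x y hx hy
    refine constIoi (fun r' => r'⁻¹ * Pθ i (r', φ, θ)) ?_ x hx y hy
    intro z hz
    have hzne : z ≠ 0 := ne_of_gt (lt_trans hrp hz)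
    have hdiff : DifferentiableAt ℝ (fun r' => r'⁻¹ * Pθ i (r', φ, θ)) z := by
      have hc : DifferentiableAt ℝ
          (fun r' => ((r', φ, θ) : ℝ × ℝ × (Fin (n - 2) → ℝ))) z :=
        differentiableAt_fun_id.prodMk (differentiableAt_const (φ, θ))
      exact (differentiableAt_id.inv hzne).mul
        (by have := (((hPat ((0 : ℝ), (0 : ℝ), Pi.single i (1 : ℝ)) z hz φ θ).differentiableAt
          (by simp))).comp z hc; exact this)
    have h0 := hrθ z hz φ θ i
    have e : (fun r' => deriv (fun t => r'⁻¹ * N r' φ (Function.update θ i t)) (θ i))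
        =ᶠ[nhds z] (fun r' => r'⁻¹ * Pθ i (r', φ, θ)) := by
      filter_upwards [isOpen_Ioi.eventually_mem (Set.mem_Ioi.mpr hz)] with r' hr'
      rw [((hSθ r' hr' φ θ i (θ i)).const_mul r'⁻¹).deriv, Function.update_eq_self]
    rw [e.deriv_eq] at h0
    exact h0 ▸ hdiff.hasDerivAt
  -- differentiability of sqrt ∘ V on (rp, ∞)
  have hVdiff : ∀ z : ℝ, rp < z → DifferentiableAt ℝ V z := by
    intro z hz
    have hzne : z ≠ 0 := ne_of_gt (lt_trans hrp hz)
    have hVev : V =ᶠ[nhds z]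
        (fun r => r ^ 2 / ℓ ^ 2 * (1 + a / r ^ (n - 1) - r₀ ^ n / r ^ n)) := by
      filter_upwards [isOpen_Ioi.eventually_mem (Set.mem_Ioi.mpr hz)] with r hr
      exact hV r (lt_trans hrp hr)
    have hform : DifferentiableAt ℝ
        (fun r : ℝ => r ^ 2 / ℓ ^ 2 * (1 + a / r ^ (n - 1) - r₀ ^ n / r ^ n)) z := by
      have h1 : DifferentiableAt ℝ (fun r : ℝ => r ^ 2 / ℓ ^ 2) z :=
        (differentiableAt_pow 2).div_const _
      have h2 : DifferentiableAt ℝ (fun r : ℝ => a / r ^ (n - 1)) z :=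
        (differentiableAt_const a).div (differentiableAt_pow _) (pow_ne_zero _ hzne)
      have h3 : DifferentiableAt ℝ (fun r : ℝ => r₀ ^ n / r ^ n) z :=
        (differentiableAt_const _).div (differentiableAt_pow _) (pow_ne_zero _ hzne)
      exact h1.mul (((differentiableAt_const 1).add h2).sub h3)
    exact hform.congr_of_eventuallyEq hVev
  -- fact 4 : (sqrt V)⁻¹ Pφ is independent of r
  have fact4 : ∀ (φ : ℝ) (θ : Fin (n - 2) → ℝ) (x y : ℝ), rp < x → rp < y →
      (Real.sqrt (V x))⁻¹ * Pφ (x, φ, θ) = (Real.sqrt (V y))⁻¹ * Pφ (y, φ, θ) := by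
    intro φ θ x y hx hy
    refine constIoi (fun r' => (Real.sqrt (V r'))⁻¹ * Pφ (r', φ, θ)) ?_ x hx y hy
    intro z hz
    have hdiff : DifferentiableAt ℝ
        (fun r' => (Real.sqrt (V r'))⁻¹ * Pφ (r', φ, θ)) z := by
      have hs : DifferentiableAt ℝ (fun r' => Real.sqrt (V r')) z :=
        (hVdiff z hz).sqrt (ne_of_gt (hVpos z hz))
      have hc : DifferentiableAt ℝ
          (fun r' => ((r', φ, θ) : ℝ × ℝ × (Fin (n - 2) → ℝ))) z :=
        differentiableAt_fun_id.prodMk (differentiableAt_const (φ, θ))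
      exact (hs.inv (ne_of_gt (Real.sqrt_pos.mpr (hVpos z hz)))).mul
        (by have := (((hPat ((0 : ℝ), (1 : ℝ), (0 : Fin (n - 2) → ℝ)) z hz φ θ).differentiableAt
          (by simp))).comp z hc; exact this)
    have h0 := hrφ z hz φ θ
    have e : (fun r' => deriv (fun φ' => (Real.sqrt (V r'))⁻¹ * N r' φ' θ) φ)
        =ᶠ[nhds z] (fun r' => (Real.sqrt (V r'))⁻¹ * Pφ (r', φ, θ)) := by
      filter_upwards [isOpen_Ioi.eventually_mem (Set.mem_Ioi.mpr hz)] with r' hr'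
      rw [((hSφ r' hr' φ θ).const_mul (Real.sqrt (V r'))⁻¹).deriv]
    rw [e.deriv_eq] at h0
    exact h0 ▸ hdiff.hasDerivAt
  -- the base radius
  have hr₁ : rp < rp + 1 := lt_add_one rp
  set r₁ : ℝ := rp + 1 with hr₁def
  have hupd0 : ∀ (i : Fin (n - 2)), Function.update (0 : Fin (n - 2) → ℝ) i 0 = 0 := by
    intro i
    funext l
    simp [Function.update_apply]
  refine ⟨fun r => N r 0 0,
    fun φ => (Real.sqrt (V r₁))⁻¹ * (N r₁ φ 0 - N r₁ 0 0),
    fun i t => r₁⁻¹ * (N r₁ 0 (Function.update 0 i t) - N r₁ 0 0), ?_, ?_, ?_, ?_, ?_⟩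
  · -- k smooth
    have hmap : ContDiff ℝ (⊤ : ℕ∞) (fun r : ℝ => ((r, 0, 0) : ℝ × ℝ × (Fin (n - 2) → ℝ))) :=
      contDiff_id.prodMk contDiff_const
    have h1 : ContDiffOn ℝ (⊤ : ℕ∞) (fun r : ℝ => F (r, 0, 0)) (Set.Ioi rp) :=
      hNsmooth.comp hmap.contDiffOn (fun r hr => Set.mem_prod.mpr ⟨hr, trivial⟩)
    exact h1
  · -- h smooth
    have hφs : ContDiff ℝ (⊤ : ℕ∞) (fun φ => N r₁ φ 0) := by
      rw [← contDiffOn_univ]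
      exact hNsmooth.comp ((contDiff_const.prodMk (contDiff_id.prodMk contDiff_const)).contDiffOn)
        (fun φ _ => Set.mem_prod.mpr ⟨hr₁, trivial⟩)
    exact contDiff_const.mul (hφs.sub contDiff_const)
  · -- h periodic
    intro φ
    simp [hNφ]
  · -- f i smooth and periodic
    intro i
    constructor
    · have hupd : ContDiff ℝ (⊤ : ℕ∞) (fun t : ℝ => Function.update (0 : Fin (n - 2) → ℝ) i t) := by
        rw [contDiff_pi]
        intro j
        rcases eq_or_ne j i with h | h
        · subst h; simpa [Function.update_self] using contDiff_fun_id
        · simpa [Function.update_of_ne h] using contDiff_const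
      have hθs : ContDiff ℝ (⊤ : ℕ∞) (fun t : ℝ => N r₁ 0 (Function.update 0 i t)) := by
        rw [← contDiffOn_univ]
        exact hNsmooth.comp ((contDiff_const.prodMk (contDiff_const.prodMk hupd)).contDiffOn)
          (fun t _ => Set.mem_prod.mpr ⟨hr₁, trivial⟩)
      exact contDiff_const.mul (hθs.sub contDiff_const)
    · intro t
      have h0 := hNθ r₁ 0 (Function.update 0 i t) i
      simp only [Function.update_idem, Function.update_self] at h0
      simp only [h0]
  · -- the decomposition
    intro r hr φ θ
    have hrne : r ≠ 0 := ne_of_gt (lt_trans hrp hr)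
    -- additive separation in θ
    have sep : ∀ s : Finset (Fin (n - 2)),
        N r φ (fun l => if l ∈ s then θ l else 0)
          = N r φ 0 + ∑ i ∈ s, (N r φ (Function.update 0 i (θ i)) - N r φ 0) := by
      intro s
      induction s using Finset.induction_on with
      | empty =>
        have h0 : (fun l : Fin (n - 2) => if l ∈ (∅ : Finset (Fin (n - 2))) then θ l else 0)
            = 0 := by
          funext l; simp
        rw [h0]; simp
      | @insert j s hj IH =>
        have hψj : (fun l => if l ∈ s then θ l else 0) j = 0 := by simp [hj]
        have hmask : (fun l => if l ∈ insert j s then θ l else 0)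
            = Function.update (fun l => if l ∈ s then θ l else 0) j (θ j) := by
          funext l
          rcases eq_or_ne l j with h | h
          · subst h; simp
          · simp [Function.update_of_ne h, Finset.mem_insert, h]
        have hD : ∀ t : ℝ, HasDerivAt (fun t =>
            N r φ (Function.update (fun l => if l ∈ s then θ l else 0) j t)
              - N r φ (Function.update 0 j t)) 0 t := by
          intro t
          have h1 := hSθ r hr φ (fun l => if l ∈ s then θ l else 0) j t
          have h2 := hSθ r hr φ (0 : Fin (n - 2) → ℝ) j t
          have heq := factD r hr φ j
            (Function.update (fun l => if l ∈ s then θ l else 0) j t)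
            (Function.update 0 j t) (by simp [Function.update_self])
          have h3 := h1.sub h2
          rw [heq, sub_self] at h3
          exact h3
        have hc := constR _ hD (θ j) 0
        have eψ : Function.update (fun l => if l ∈ s then θ l else 0) j 0
            = fun l => if l ∈ s then θ l else 0 := by
          funext l
          rcases eq_or_ne l j with h | h
          · subst h; simp [hj]
          · simp [Function.update_of_ne h]
        rw [eψ, hupd0 j] at hc
        rw [hmask, Finset.sum_insert hj]
        have : N r φ (Function.update (fun l => if l ∈ s then θ l else 0) j (θ j))
            = N r φ (fun l => if l ∈ s then θ l else 0)
              + (N r φ (Function.update 0 j (θ j)) - N r φ 0) := by linarith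
        rw [this, IH]
        ring
    have hsepθ : N r φ θ = N r φ 0
        + ∑ i, (N r φ (Function.update 0 i (θ i)) - N r φ 0) := by
      have h1 := sep Finset.univ
      have h2 : (fun l => if l ∈ (Finset.univ : Finset (Fin (n - 2))) then θ l else 0) = θ := by
        funext l; simp
      rw [h2] at h1
      exact h1
    -- φ-independence of the θ-increments
    have hbφ : ∀ i, N r φ (Function.update 0 i (θ i)) - N r φ 0
        = N r 0 (Function.update 0 i (θ i)) - N r 0 0 := by
      intro i
      have hD : ∀ t : ℝ, HasDerivAt (fun t =>
          N r φ (Function.update 0 i t) - N r 0 (Function.update 0 i t)) 0 t := by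
        intro t
        have h1 := hSθ r hr φ (0 : Fin (n - 2) → ℝ) i t
        have h2 := hSθ r hr 0 (0 : Fin (n - 2) → ℝ) i t
        have heq := fact2 r hr i (Function.update (0 : Fin (n - 2) → ℝ) i t) φ 0
        have h3 := h1.sub h2
        rw [heq, sub_self] at h3
        exact h3
      have hc := constR _ hD (θ i) 0
      rw [hupd0 i] at hc
      linarith
    -- r-scaling of the θ-increments
    have hciv : ∀ (i : Fin (n - 2)) (t : ℝ),
        N r 0 (Function.update 0 i t) - N r 0 0
          = r * (r₁⁻¹ * (N r₁ 0 (Function.update 0 i t) - N r₁ 0 0)) := by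
      intro i t
      have hD : ∀ t : ℝ, HasDerivAt (fun t =>
          r⁻¹ * N r 0 (Function.update 0 i t)
            - r₁⁻¹ * N r₁ 0 (Function.update 0 i t)) 0 t := by
        intro t
        have h1 := (hSθ r hr 0 (0 : Fin (n - 2) → ℝ) i t).const_mul r⁻¹
        have h2 := (hSθ r₁ hr₁ 0 (0 : Fin (n - 2) → ℝ) i t).const_mul r₁⁻¹
        have heq := fact3 i 0 (Function.update (0 : Fin (n - 2) → ℝ) i t) r r₁ hr hr₁
        have h3 := h1.sub h2
        rw [heq, sub_self] at h3
        exact h3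
      have hc := constR _ hD t 0
      rw [hupd0 i] at hc
      have hgoal : r⁻¹ * (N r 0 (Function.update 0 i t) - N r 0 0)
          = r₁⁻¹ * (N r₁ 0 (Function.update 0 i t) - N r₁ 0 0) := by
        rw [mul_sub, mul_sub]
        linarith
      rw [← hgoal, mul_inv_cancel_left₀ hrne]
    -- φ-part
    have hWr : (0 : ℝ) < Real.sqrt (V r) := Real.sqrt_pos.mpr (hVpos r hr)
    have hdφ : (Real.sqrt (V r))⁻¹ * (N r φ 0 - N r 0 0)
        = (Real.sqrt (V r₁))⁻¹ * (N r₁ φ 0 - N r₁ 0 0) := by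
      have hD : ∀ ψ : ℝ, HasDerivAt (fun ψ =>
          (Real.sqrt (V r))⁻¹ * N r ψ 0 - (Real.sqrt (V r₁))⁻¹ * N r₁ ψ 0) 0 ψ := by
        intro ψ
        have h1 := (hSφ r hr ψ (0 : Fin (n - 2) → ℝ)).const_mul (Real.sqrt (V r))⁻¹
        have h2 := (hSφ r₁ hr₁ ψ (0 : Fin (n - 2) → ℝ)).const_mul (Real.sqrt (V r₁))⁻¹
        have heq := fact4 ψ (0 : Fin (n - 2) → ℝ) r r₁ hr hr₁
        have h3 := h1.sub h2
        rw [heq, sub_self] at h3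
        exact h3
      have hc := constR _ hD φ 0
      rw [mul_sub, mul_sub]
      linarith
    have hNφ0 : N r φ 0 = N r 0 0
        + Real.sqrt (V r) * ((Real.sqrt (V r₁))⁻¹ * (N r₁ φ 0 - N r₁ 0 0)) := by
      rw [← hdφ, mul_inv_cancel_left₀ (ne_of_gt hWr)]
      ring
    have hsum : (∑ i, (N r φ (Function.update 0 i (θ i)) - N r φ 0))
        = r * ∑ i, r₁⁻¹ * (N r₁ 0 (Function.update 0 i (θ i)) - N r₁ 0 0) := by
      rw [Finset.mul_sum]
      exact Finset.sum_congr rfl fun i _ => by rw [hbφ i, hciv i (θ i)]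
    rw [hsepθ, hsum, hNφ0]
end

section
/- Let n ≥ 3 be an integer, ℓ > 0, r₀ > 0, a ∈ ℝ, Λ ∈ ℝ, r₊ > 0, and define V : (0,∞) → ℝ by V(r) = (r²/ℓ²)(1 + a/r^{n−1} − r₀ⁿ/rⁿ). Then the function r ↦ 2·(V''(r) + (n−2)V'(r)/r)·V(r) + V'(r)² + (8Λ/(n−1))·V(r) is NOT constant on the interval (r₊, ∞). (Equivalently: if this function were constant there, one would need both n + 2Λℓ²/(n−1) = 0 and −r₀ⁿ = 0, contradicting r₀ > 0.) -/
/-!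
Write `n = m + 3` and `b = -r₀ⁿ`, so that `ℓ² V(r) = r² + a r⁻ᵐ + b r⁻⁽ᵐ⁺¹⁾` is a Laurent
polynomial. Then the expression in question, minus a constant `c` and multiplied by
`ℓ⁴ (m + 2) r²ᵐ⁺⁴`, is a polynomial in `r` whose constant coefficient is
`(m + 1)(m + 2)(m + 3) b² > 0`. If the expression were equal to `c` on `(r₊, ∞)`, this nonzero
polynomial would have infinitely many roots.
-/

open Polynomial Set

section Potential

variable (ℓ a b : ℝ) (m : ℕ)

noncomputable def potential (r : ℝ) : ℝ :=
  (r ^ 2 + a * r ^ (-(m : ℤ)) + b * r ^ (-(m : ℤ) - 1)) / ℓ ^ 2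

noncomputable def potentialDeriv (r : ℝ) : ℝ :=
  (2 * r - a * m * r ^ (-(m : ℤ) - 1) - b * (m + 1) * r ^ (-(m : ℤ) - 1 - 1)) / ℓ ^ 2

noncomputable def potentialDeriv2 (r : ℝ) : ℝ :=
  (2 + a * m * (m + 1) * r ^ (-(m : ℤ) - 1 - 1)
    + b * (m + 1) * (m + 2) * r ^ (-(m : ℤ) - 1 - 1 - 1)) / ℓ ^ 2

variable {r : ℝ}

theorem hasDerivAt_potential (hr : r ≠ 0) :
    HasDerivAt (potential ℓ a b m) (potentialDeriv ℓ a b m r) r := by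
  have h := (((hasDerivAt_pow 2 r).add ((hasDerivAt_zpow (-(m : ℤ)) r (.inl hr)).const_mul a)).add
    ((hasDerivAt_zpow (-(m : ℤ) - 1) r (.inl hr)).const_mul b)).div_const (ℓ ^ 2)
  refine h.congr_deriv ?_
  simp only [potentialDeriv]
  push_cast
  ring

theorem hasDerivAt_potentialDeriv (hr : r ≠ 0) :
    HasDerivAt (potentialDeriv ℓ a b m) (potentialDeriv2 ℓ a b m r) r := by
  have h := ((((hasDerivAt_id r).const_mul 2).sub
    ((hasDerivAt_zpow (-(m : ℤ) - 1) r (.inl hr)).const_mul (a * m))).sub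
    ((hasDerivAt_zpow (-(m : ℤ) - 1 - 1) r (.inl hr)).const_mul (b * (m + 1)))).div_const (ℓ ^ 2)
  refine h.congr_deriv ?_
  simp only [potentialDeriv2]
  push_cast
  ring

theorem sq_div_mul_eq_potential (r₀ : ℝ) (hr : r ≠ 0) :
    r ^ 2 / ℓ ^ 2 * (1 + a / r ^ (m + 2) - r₀ ^ (m + 3) / r ^ (m + 3))
      = potential ℓ a (-r₀ ^ (m + 3)) m r := by
  have hm : -(m : ℤ) - 1 = -((m + 1 : ℕ) : ℤ) := by push_cast; ring
  simp only [potential, hm, zpow_neg, zpow_natCast]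
  field_simp
  ring

end Potential

theorem deriv_eqOn_Ioi {f g g' : ℝ → ℝ} {t : ℝ} (hfg : EqOn f g (Ioi t))
    (hg : ∀ r > t, HasDerivAt g (g' r) r) : EqOn (deriv f) g' (Ioi t) := fun r hr =>
  ((hfg.eventuallyEq_of_mem (Ioi_mem_nhds hr)).deriv_eq).trans (hg r hr).deriv

noncomputable def clearedPoly (ℓ a b Λ c : ℝ) (m : ℕ) : ℝ[X] :=
  C (4 * (m + 3) * (m + 2) + 8 * Λ * ℓ ^ 2) * X ^ (2 * m + 6)
    + C (a * (8 * (m + 2) + 8 * Λ * ℓ ^ 2)) * X ^ (m + 4)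
    + C (b * (2 * (m + 3) * (m + 2) + 8 * Λ * ℓ ^ 2)) * X ^ (m + 3)
    + C ((m + 2) * a ^ 2 * m ^ 2) * X ^ 2
    + C (2 * a * b * (m + 2) * (m + 1) ^ 2) * X
    + C ((m + 1) * (m + 2) * (m + 3) * b ^ 2)
    - C (ℓ ^ 4 * (m + 2) * c) * X ^ (2 * m + 4)

theorem eval_clearedPoly {ℓ : ℝ} (a b Λ c : ℝ) (m : ℕ) (hℓ : ℓ ≠ 0) {r : ℝ} (hr : r ≠ 0) :
    (clearedPoly ℓ a b Λ c m).eval r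
      = (2 * (potentialDeriv2 ℓ a b m r + (m + 1) * potentialDeriv ℓ a b m r / r)
            * potential ℓ a b m r + potentialDeriv ℓ a b m r ^ 2
          + 8 * Λ / (m + 2) * potential ℓ a b m r - c) * (ℓ ^ 4 * (m + 2) * r ^ (2 * m + 4)) := by
  have h₁ : r ^ (-(m : ℤ) - 1) = (r ^ (m + 1))⁻¹ := by
    rw [← zpow_natCast, ← zpow_neg]; push_cast; ring_nf
  have h₂ : r ^ (-(m : ℤ) - 1 - 1) = (r ^ (m + 2))⁻¹ := by
    rw [← zpow_natCast, ← zpow_neg]; push_cast; ring_nf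
  have h₃ : r ^ (-(m : ℤ) - 1 - 1 - 1) = (r ^ (m + 3))⁻¹ := by
    rw [← zpow_natCast, ← zpow_neg]; push_cast; ring_nf
  simp only [clearedPoly, potential, potentialDeriv, potentialDeriv2, h₁, h₂, h₃, zpow_neg,
    zpow_natCast, eval_add, eval_sub, eval_mul, eval_pow, eval_C, eval_X]
  field_simp
  ring

theorem eval_zero_clearedPoly (ℓ a b Λ c : ℝ) (m : ℕ) :
    (clearedPoly ℓ a b Λ c m).eval 0 = (m + 1) * (m + 2) * (m + 3) * b ^ 2 := by
  simp [clearedPoly]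

theorem stmt_5_general (n : ℕ) (hn : 3 ≤ n) (ℓ r₀ : ℝ) (hℓ : 0 < ℓ) (hr₀ : 0 < r₀) (a Λ : ℝ)
    (rp : ℝ)
    (V : ℝ → ℝ)
    (hV : ∀ r > (0 : ℝ), V r = r ^ 2 / ℓ ^ 2 * (1 + a / r ^ (n - 1) - r₀ ^ n / r ^ n)) :
    ¬ ∃ C : ℝ, ∀ r > rp,
      2 * (deriv (deriv V) r + ((n : ℝ) - 2) * deriv V r / r) * V r
        + (deriv V r) ^ 2 + (8 * Λ / ((n : ℝ) - 1)) * V r = C := by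
  rintro ⟨c, hc⟩
  obtain ⟨m, rfl⟩ : ∃ m, n = m + 3 := ⟨n - 3, by omega⟩
  set b := -r₀ ^ (m + 3)
  have hV₀ : EqOn V (potential ℓ a b m) (Ioi 0) := fun r hr =>
    (hV r hr).trans (sq_div_mul_eq_potential ℓ a m r₀ hr.ne')
  have hV₁ := deriv_eqOn_Ioi hV₀ fun r hr => hasDerivAt_potential ℓ a b m hr.ne'
  have hV₂ := deriv_eqOn_Ioi hV₁ fun r hr => hasDerivAt_potentialDeriv ℓ a b m hr.ne'
  have hroots : Ioi (max rp 0) ⊆ {r | (clearedPoly ℓ a b Λ c m).IsRoot r} := fun r hr => by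
    have hr₀ : 0 < r := (le_max_right rp 0).trans_lt hr
    have h := hc r ((le_max_left rp 0).trans_lt hr)
    rw [hV₀ hr₀, hV₁ hr₀, hV₂ hr₀] at h
    rw [mem_ofPred, IsRoot, eval_clearedPoly a b Λ c m hℓ.ne' hr₀.ne', ← h]
    push_cast
    ring
  have hP : clearedPoly ℓ a b Λ c m = 0 :=
    eq_zero_of_infinite_isRoot _ ((Ioi_infinite _).mono hroots)
  have hb : b ≠ 0 := neg_ne_zero.mpr (pow_ne_zero _ hr₀.ne')
  have h := eval_zero_clearedPoly ℓ a b Λ c m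
  rw [hP, eval_zero] at h
  have : (0 : ℝ) < (m + 1) * (m + 2) * (m + 3) * b ^ 2 := by positivity
  linarith

/-- for V(r) = (r²/ℓ²)(1 + a/r^{n−1} − r₀ⁿ/rⁿ) with r₀ > 0, the function
2(V'' + (n−2)V'/r)V + (V')² + (8Λ/(n−1))V is not constant on (r₊, ∞). -/
theorem stmt_5 (n : ℕ) (hn : 3 ≤ n) (ℓ r₀ : ℝ) (hℓ : 0 < ℓ) (hr₀ : 0 < r₀) (a Λ : ℝ)
    (rp : ℝ) (hrp : 0 < rp)
    (V : ℝ → ℝ)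
    (hV : ∀ r > (0 : ℝ), V r = r ^ 2 / ℓ ^ 2 * (1 + a / r ^ (n - 1) - r₀ ^ n / r ^ n)) :
    ¬ ∃ C : ℝ, ∀ r > rp,
      2 * (deriv (deriv V) r + ((n : ℝ) - 2) * deriv V r / r) * V r
        + (deriv V r) ^ 2 + (8 * Λ / ((n : ℝ) - 1)) * V r = C :=
  stmt_5_general n hn ℓ r₀ hℓ hr₀ a Λ rp V hV
end

section
/- Let n ≥ 3 be an integer, ℓ > 0, r₊ > 0, Λ < 0, and a, c, d ∈ ℝ. Suppose c·r + d > 0 for all r > r₊ and that the identity −(c·r/(c·r + d))·(n + a/r^{n−1}) = 2Λℓ²/(n−1) holds for all r > r₊. Then a = 0, d = 0, Λ = −n(n−1)/(2ℓ²), and c > 0. -/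
/-! Clearing denominators turns the identity into `c (n + K) rⁿ + K d rⁿ⁻¹ + c a r = 0` for all
`r > r₊`, where `K = 2Λℓ²/(n−1) < 0`. A polynomial with infinitely many roots vanishes, and for
`n ≥ 3` the exponents `n`, `n − 1`, `1` are distinct, so all three coefficients vanish: `K d = 0`
gives `d = 0`, positivity of `c r` then gives `c > 0`, and `c a = 0`, `c (n + K) = 0` give `a = 0`
and `K = −n`. -/

open Polynomial

theorem eq_zero_of_trinomial_eq_zero_of_infinite {R : Type*} [CommRing R] [IsDomain R]
    {s : Set R} (hs : s.Infinite) {i j k : ℕ} (hij : i ≠ j) (hik : i ≠ k) (hjk : j ≠ k)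
    {a b c : R} (h : ∀ r ∈ s, a * r ^ i + b * r ^ j + c * r ^ k = 0) :
    a = 0 ∧ b = 0 ∧ c = 0 := by
  set p : R[X] := C a * X ^ i + C b * X ^ j + C c * X ^ k
  have hp : p = 0 := eq_zero_of_infinite_isRoot p <| hs.mono fun r hr => by simpa [p] using h r hr
  have coeff_p (l : ℕ) : (if l = i then a else 0) + (if l = j then b else 0)
      + (if l = k then c else 0) = p.coeff l := by
    simp [p]
  refine ⟨?_, ?_, ?_⟩
  · simpa [hp, hij, hik] using coeff_p i
  · simpa [hp, hij.symm, hjk] using coeff_p j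
  · simpa [hp, hik.symm, hjk.symm] using coeff_p k

theorem trinomial_eq_zero_of_identity {n : ℕ} (hn : 0 < n) {a c d K r : ℝ} (hr : r ≠ 0)
    (hcd : c * r + d ≠ 0) (h : -(c * r / (c * r + d)) * ((n : ℝ) + a / r ^ (n - 1)) = K) :
    c * (n + K) * r ^ n + K * d * r ^ (n - 1) + c * a * r ^ 1 = 0 := by
  obtain ⟨m, rfl⟩ : ∃ m, n = m + 1 := ⟨n - 1, by omega⟩
  simp only [Nat.add_sub_cancel] at h ⊢
  have hrm : r ^ m ≠ 0 := pow_ne_zero m hr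
  field_simp at h
  push_cast at h ⊢
  linear_combination -h

/-- if cr + d > 0 on (r₊,∞) and
−(cr/(cr+d))(n + a/r^{n−1}) = 2Λℓ²/(n−1) for all r > r₊ (with Λ < 0),
then a = 0, d = 0, Λ = −n(n−1)/(2ℓ²) and c > 0. -/
theorem stmt_10 (n : ℕ) (hn : 3 ≤ n) (ℓ : ℝ) (hℓ : 0 < ℓ) (rp : ℝ) (hrp : 0 < rp)
    (Λ : ℝ) (hΛ : Λ < 0) (a c d : ℝ)
    (hpos : ∀ r > rp, 0 < c * r + d)
    (hid : ∀ r > rp,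
      -(c * r / (c * r + d)) * ((n : ℝ) + a / r ^ (n - 1))
        = 2 * Λ * ℓ ^ 2 / ((n : ℝ) - 1)) :
    a = 0 ∧ d = 0 ∧ Λ = -((n : ℝ) * ((n : ℝ) - 1)) / (2 * ℓ ^ 2) ∧ 0 < c := by
  set K : ℝ := 2 * Λ * ℓ ^ 2 / ((n : ℝ) - 1) with hK
  have hn1 : (0 : ℝ) < n - 1 := sub_pos.mpr (by exact_mod_cast (by omega : 1 < n))
  have hK_neg : K < 0 := div_neg_of_neg_of_pos (by nlinarith [pow_pos hℓ 2]) hn1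
  obtain ⟨hA, hB, hC⟩ := eq_zero_of_trinomial_eq_zero_of_infinite (Set.Ioi_infinite rp)
    (by omega : n ≠ n - 1) (by omega : n ≠ 1) (by omega : n - 1 ≠ 1)
    fun r hr => trinomial_eq_zero_of_identity (by omega) (hrp.trans hr).ne' (hpos r hr).ne'
      (hid r hr)
  have hd : d = 0 := (mul_eq_zero.mp hB).resolve_left hK_neg.ne
  have hc : 0 < c := by
    have := hpos (rp + 1) (by linarith)
    rw [hd, add_zero] at this
    exact pos_of_mul_pos_left this (by linarith)
  have ha : a = 0 := (mul_eq_zero.mp hC).resolve_left hc.ne'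
  have hK_val : K = -n := by linarith [(mul_eq_zero.mp hA).resolve_left hc.ne']
  refine ⟨ha, hd, ?_, hc⟩
  rw [hK, div_eq_iff hn1.ne'] at hK_val
  rw [eq_div_iff (by positivity)]
  linear_combination hK_val
end

section
/- Let n ≥ 3 be an integer, ℓ > 0, r₀ > 0, a ∈ ℝ, r₊ > 0, and define V : (0,∞) → ℝ by V(r) = (r²/ℓ²)(1 + a/r^{n−1} − r₀ⁿ/rⁿ), assumed positive on (r₊, ∞). Define the mean curvature H(r) := V(r)^{−1/2}·(V'(r)/2 + (n−2)·V(r)/r) for r > r₊. Then lim_{r→∞} rⁿ·(H(r) − (n−1)/ℓ) = r₀ⁿ/(2ℓ); i.e., H(r) = (n−1)/ℓ + r₀ⁿ/(2ℓrⁿ) + o(r^{−n}) as r → ∞. -/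
/-!
Write `V = (r/ℓ)² W` with `W = 1 + x - y`, `x = a/r^(n-1)`, `y = r₀ⁿ/rⁿ`. Then
`ℓ √W H = (n-1)(1 + x/2) - (n-2) y/2`, hence
`ℓ √W (H - (n-1)/ℓ) = (n-1)(1 + x/2 - √W) - (n-2) y/2`, and rationalising,
`1 + x/2 - √W = (x²/4 + y) / (1 + x/2 + √W)`. After multiplying by `rⁿ`, the term `rⁿ x² = a²/r^(n-2)`
vanishes at infinity because `n ≥ 3`, while `rⁿ y = r₀ⁿ`; so the limit is
`((n-1) - (n-2)) r₀ⁿ / (2ℓ)`.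
-/

open Filter Topology

/-- `V = (r/ℓ)² · blackening (n - 1) a r₀ⁿ`. -/
noncomputable def blackening (k : ℕ) (a b r : ℝ) : ℝ := 1 + a / r ^ k - b / r ^ (k + 1)

theorem hasDerivAt_blackening (k : ℕ) (a b : ℝ) {r : ℝ} (hr : r ≠ 0) :
    HasDerivAt (blackening k a b) (-(k * a) / r ^ (k + 1) + (k + 1) * b / r ^ (k + 2)) r := by
  have hx := (hasDerivAt_const r a).div (hasDerivAt_pow k r) (pow_ne_zero k hr)
  have hy := (hasDerivAt_const r b).div (hasDerivAt_pow (k + 1) r) (pow_ne_zero _ hr)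
  refine (((hasDerivAt_const r 1).add hx).sub hy).congr_deriv ?_
  rcases k with _ | k
  · simp [neg_div]
  · push_cast
    field_simp
    ring

theorem tendsto_blackening {k : ℕ} (hk : k ≠ 0) (a b : ℝ) :
    Tendsto (blackening k a b) atTop (𝓝 1) := by
  have hx : Tendsto (fun r : ℝ => a / r ^ k) atTop (𝓝 0) :=
    tendsto_const_nhds.div_atTop (tendsto_pow_atTop hk)
  have hy : Tendsto (fun r : ℝ => b / r ^ (k + 1)) atTop (𝓝 0) :=
    tendsto_const_nhds.div_atTop (tendsto_pow_atTop k.succ_ne_zero)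
  show Tendsto (fun r => 1 + a / r ^ k - b / r ^ (k + 1)) atTop (𝓝 1)
  simpa using (tendsto_const_nhds.add hx).sub hy

theorem meanCurvature_eq {V W : ℝ → ℝ} {W' ℓ r c : ℝ} (hℓ : 0 < ℓ) (hr : 0 < r)
    (hW : 0 < W r) (hW' : HasDerivAt W W' r) (hV : V =ᶠ[𝓝 r] fun s => s ^ 2 / ℓ ^ 2 * W s) :
    (Real.sqrt (V r))⁻¹ * (deriv V r / 2 + c * V r / r)
      = ((c + 1) * W r + r * W' / 2) / (ℓ * Real.sqrt (W r)) := by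
  have hVr : V r = (r / ℓ) ^ 2 * W r := by rw [hV.eq_of_nhds]; ring
  have hdV : deriv V r = 2 * r / ℓ ^ 2 * W r + r ^ 2 / ℓ ^ 2 * W' := by
    rw [hV.deriv_eq]
    exact (((hasDerivAt_pow 2 r).div_const (ℓ ^ 2)).mul hW').deriv.trans (by push_cast; ring)
  have hsqrtV : Real.sqrt (V r) = r / ℓ * Real.sqrt (W r) := by
    rw [hVr, Real.sqrt_mul (by positivity), Real.sqrt_sq (by positivity)]
  have hσ : 0 < Real.sqrt (W r) := Real.sqrt_pos.mpr hW
  rw [hsqrtV, hdV, hVr]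
  field_simp
  ring

theorem pow_mul_one_add_sub_sqrt_blackening {k : ℕ} (hk : k ≠ 0) {a b r : ℝ} (hr : r ≠ 0)
    (hW : 0 ≤ blackening k a b r) (hp : 0 < 1 + a / (2 * r ^ k)) :
    r ^ (k + 1) * (1 + a / (2 * r ^ k) - Real.sqrt (blackening k a b r))
      = (a ^ 2 / (4 * r ^ (k - 1)) + b) / (1 + a / (2 * r ^ k) + Real.sqrt (blackening k a b r)) := by
  obtain ⟨j, rfl⟩ : ∃ j, k = j + 1 := ⟨k - 1, by omega⟩
  have hσ := Real.sq_sqrt hW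
  set σ := Real.sqrt (blackening (j + 1) a b r)
  set p := 1 + a / (2 * r ^ (j + 1)) with hp_def
  have hpσ : 0 < p + σ := by positivity
  rw [eq_div_iff hpσ.ne', mul_assoc, show (p - σ) * (p + σ) = p ^ 2 - σ ^ 2 by ring, hσ,
    blackening, Nat.add_sub_cancel, hp_def]
  field_simp
  ring

theorem tendsto_pow_mul_one_add_sub_sqrt_blackening {k : ℕ} (hk : 2 ≤ k) (a b : ℝ) :
    Tendsto (fun r => r ^ (k + 1) * (1 + a / (2 * r ^ k) - Real.sqrt (blackening k a b r)))
      atTop (𝓝 (b / 2)) := by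
  have hσ := (tendsto_blackening (by omega : k ≠ 0) a b).sqrt
  have hx : Tendsto (fun r : ℝ => 1 + a / (2 * r ^ k)) atTop (𝓝 1) := by
    simpa using tendsto_const_nhds.add
      (tendsto_const_nhds.div_atTop
        ((tendsto_pow_atTop (n := k) (by omega)).const_mul_atTop (zero_lt_two' ℝ)))
  have hq : Tendsto (fun r : ℝ => a ^ 2 / (4 * r ^ (k - 1))) atTop (𝓝 0) :=
    tendsto_const_nhds.div_atTop
      ((tendsto_pow_atTop (n := k - 1) (by omega)).const_mul_atTop (by norm_num : (0 : ℝ) < 4))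
  have hlim := (hq.add_const b).div (hx.add hσ) (by norm_num)
  rw [Real.sqrt_one, zero_add, show (1 : ℝ) + 1 = 2 by norm_num] at hlim
  refine hlim.congr' ?_
  filter_upwards [eventually_gt_atTop 0, hx.eventually (lt_mem_nhds one_pos),
    (tendsto_blackening (by omega : k ≠ 0) a b).eventually (lt_mem_nhds zero_lt_one)]
    with r hr hp hW
  exact (pow_mul_one_add_sub_sqrt_blackening (by omega) hr.ne' hW.le (by linarith)).symm

theorem pow_mul_meanCurvature_blackening_sub {V : ℝ → ℝ} {k : ℕ} {ℓ a b r : ℝ} (hℓ : 0 < ℓ)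
    (hr : 0 < r) (hW : 0 < blackening k a b r)
    (hV : V =ᶠ[𝓝 r] fun s => s ^ 2 / ℓ ^ 2 * blackening k a b s) :
    r ^ (k + 1) * ((Real.sqrt (V r))⁻¹ * (deriv V r / 2 + ((k : ℝ) - 1) * V r / r) - k / ℓ)
      = (k * (r ^ (k + 1) * (1 + a / (2 * r ^ k) - Real.sqrt (blackening k a b r)))
          - (k - 1) * b / 2) / (ℓ * Real.sqrt (blackening k a b r)) := by
  rw [meanCurvature_eq hℓ hr hW (hasDerivAt_blackening k a b hr.ne') hV]
  have hσ : 0 < Real.sqrt (blackening k a b r) := Real.sqrt_pos.mpr hW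
  set σ := Real.sqrt (blackening k a b r)
  rw [blackening]
  field_simp
  ring

theorem stmt_11_general (n : ℕ) (hn : 3 ≤ n) (ℓ r₀ : ℝ) (hℓ : 0 < ℓ) (a : ℝ)
    (rp : ℝ)
    (V : ℝ → ℝ)
    (hV : ∀ r > (0 : ℝ), V r = r ^ 2 / ℓ ^ 2 * (1 + a / r ^ (n - 1) - r₀ ^ n / r ^ n))
    (H : ℝ → ℝ)
    (hH : ∀ r > rp, H r = (Real.sqrt (V r))⁻¹ * (deriv V r / 2 + ((n : ℝ) - 2) * V r / r)) :
    Tendsto (fun r => r ^ n * (H r - ((n : ℝ) - 1) / ℓ)) atTop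
      (nhds (r₀ ^ n / (2 * ℓ))) := by
  obtain ⟨k, rfl⟩ : ∃ k, n = k + 1 := ⟨n - 1, by omega⟩
  set b := r₀ ^ (k + 1)
  have hW := tendsto_blackening (by omega : k ≠ 0) a b
  have hlim := ((((tendsto_pow_mul_one_add_sub_sqrt_blackening (by omega : 2 ≤ k) a b).const_mul
    (k : ℝ)).sub_const ((k - 1) * b / 2)).div (tendsto_const_nhds.mul hW.sqrt)
    (by rw [Real.sqrt_one, mul_one]; exact hℓ.ne'))
  rw [Real.sqrt_one, mul_one, show (k : ℝ) * (b / 2) - (k - 1) * b / 2 = b / 2 by ring,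
    div_div] at hlim
  push_cast
  refine hlim.congr' ?_
  filter_upwards [eventually_gt_atTop rp, eventually_gt_atTop 0,
    hW.eventually (lt_mem_nhds one_pos)] with r hrp hr hWr
  have hV' : V =ᶠ[𝓝 r] fun s => s ^ 2 / ℓ ^ 2 * blackening k a b s := by
    filter_upwards [lt_mem_nhds hr] with s hs
    rw [hV s hs, Nat.add_sub_cancel, blackening]
  rw [hH r hrp, show ((k + 1 : ℕ) : ℝ) - 2 = k - 1 by push_cast; ring, add_sub_cancel_right]
  exact (pow_mul_meanCurvature_blackening_sub hℓ hr hWr hV').symm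

/-- the mean curvature H(r) = V^{−1/2}(V'/2 + (n−2)V/r) satisfies
H(r) = (n−1)/ℓ + r₀ⁿ/(2ℓrⁿ) + o(r^{−n}), i.e. rⁿ(H(r) − (n−1)/ℓ) → r₀ⁿ/(2ℓ). -/
theorem stmt_11 (n : ℕ) (hn : 3 ≤ n) (ℓ r₀ : ℝ) (hℓ : 0 < ℓ) (hr₀ : 0 < r₀) (a : ℝ)
    (rp : ℝ) (hrp : 0 < rp)
    (V : ℝ → ℝ)
    (hV : ∀ r > (0 : ℝ), V r = r ^ 2 / ℓ ^ 2 * (1 + a / r ^ (n - 1) - r₀ ^ n / r ^ n))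
    (hVpos : ∀ r > rp, 0 < V r)
    (H : ℝ → ℝ)
    (hH : ∀ r > rp, H r = (Real.sqrt (V r))⁻¹ * (deriv V r / 2 + ((n : ℝ) - 2) * V r / r)) :
    Tendsto (fun r => r ^ n * (H r - ((n : ℝ) - 1) / ℓ)) atTop
      (nhds (r₀ ^ n / (2 * ℓ))) :=
  stmt_11_general n hn ℓ r₀ hℓ a rp V hV H hH
end

section
/- Let n ≥ 3 be an integer, ℓ > 0, r₀ > 0, a ∈ ℝ, r₊ > 0, and define V : (0,∞) → ℝ by V(r) = (r²/ℓ²)(1 + a/r^{n−1} − r₀ⁿ/rⁿ), assumed positive on (r₊, ∞). Then lim_{r→∞} rⁿ·( 3r²/(ℓ³V(r)) − r⁴/(ℓ⁵V(r)²) − 2/ℓ + a/(ℓr^{n−1}) ) = r₀ⁿ/ℓ, i.e., 3r²/(ℓ³V) − r⁴/(ℓ⁵V²) − 2/ℓ = −a/(ℓr^{n−1}) + r₀ⁿ/(ℓrⁿ) + o(r^{−n}) as r → ∞. -/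
set_option maxHeartbeats 1000000


open Filter Topology

/-- (1/ℓ)(a₁₁ − g₁₁tr_ğ(a)) = 3r²/(ℓ³V) − r⁴/(ℓ⁵V²) − 2/ℓ
= −a/(ℓr^{n−1}) + r₀ⁿ/(ℓrⁿ) + o(r^{−n}), i.e.
rⁿ(3r²/(ℓ³V) − r⁴/(ℓ⁵V²) − 2/ℓ + a/(ℓr^{n−1})) → r₀ⁿ/ℓ. -/
theorem stmt_15 (n : ℕ) (hn : 3 ≤ n) (ℓ r₀ : ℝ) (hℓ : 0 < ℓ) (hr₀ : 0 < r₀) (a : ℝ)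
    (rp : ℝ) (hrp : 0 < rp)
    (V : ℝ → ℝ)
    (hV : ∀ r > (0 : ℝ), V r = r ^ 2 / ℓ ^ 2 * (1 + a / r ^ (n - 1) - r₀ ^ n / r ^ n))
    (hVpos : ∀ r > rp, 0 < V r) :
    Tendsto (fun r => r ^ n *
        (3 * r ^ 2 / (ℓ ^ 3 * V r) - r ^ 4 / (ℓ ^ 5 * (V r) ^ 2) - 2 / ℓ
          + a / (ℓ * r ^ (n - 1)))) atTop (nhds (r₀ ^ n / ℓ)) := by
  have hn1 : n - 1 ≠ 0 := by omega
  have hn2 : n - 2 ≠ 0 := by omega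
  set w : ℝ → ℝ := fun r => 1 + a / r ^ (n - 1) - r₀ ^ n / r ^ n with hw
  -- basic vanishing limits
  have hinv : ∀ (c : ℝ) (k : ℕ), k ≠ 0 →
      Tendsto (fun r : ℝ => c / r ^ k) atTop (nhds 0) := by
    intro c k hk
    simpa [div_eq_mul_inv] using
      ((tendsto_pow_atTop hk).inv_tendsto_atTop).const_mul c
  have hW : Tendsto w atTop (nhds 1) := by
    have h : Tendsto (fun r : ℝ => 1 + a / r ^ (n - 1) - r₀ ^ n / r ^ n) atTop
        (nhds (1 + 0 - 0)) :=
      (((tendsto_const_nhds : Tendsto (fun _ : ℝ => (1:ℝ)) atTop (nhds 1)).add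
        (hinv a (n - 1) hn1)).sub (hinv (r₀ ^ n) n (by omega)))
    simpa [hw] using h
  -- r * (w r - 1) → 0
  have hrw : Tendsto (fun r : ℝ => r * (w r - 1)) atTop (nhds 0) := by
    have h := (hinv a (n - 2) hn2).sub (hinv (r₀ ^ n) (n - 1) hn1)
    rw [sub_zero] at h
    refine Tendsto.congr' ?_ h
    filter_upwards [eventually_gt_atTop (0 : ℝ)] with r hr
    have hr0 : r ≠ 0 := ne_of_gt hr
    have e1 : r ^ (n - 1) = r ^ (n - 2) * r := by
      rw [← pow_succ]; congr 1; omega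
    have e2 : r ^ n = r ^ (n - 2) * r * r := by
      rw [← pow_succ, ← pow_succ]; congr 1; omega
    have hr2 : r ^ (n - 2) ≠ 0 := by positivity
    have key : r * ((1 + a / r ^ (n - 1) - r₀ ^ n / r ^ n) - 1)
        = a / r ^ (n - 2) - r₀ ^ n / r ^ (n - 1) := by
      rw [e1, e2]
      field_simp
      ring
    exact key.symm
  -- the limit of the rewritten function
  set g : ℝ → ℝ := fun r =>
    (a * (r * (w r - 1)) * (w r - 1) + r₀ ^ n * (2 * w r - 1)) / (ℓ * (w r) ^ 2)
    with hg
  have hgl : Tendsto g atTop (nhds (r₀ ^ n / ℓ)) := by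
    have hc1 : Tendsto (fun _ : ℝ => (1 : ℝ)) atTop (nhds 1) := tendsto_const_nhds
    have h1 : Tendsto (fun r => a * (r * (w r - 1)) * (w r - 1)) atTop
        (nhds (a * 0 * (1 - 1))) := (hrw.const_mul a).mul (hW.sub hc1)
    have h2 : Tendsto (fun r => r₀ ^ n * (2 * w r - 1)) atTop
        (nhds (r₀ ^ n * (2 * 1 - 1))) := ((hW.const_mul 2).sub hc1).const_mul (r₀ ^ n)
    have hnum : Tendsto (fun r => a * (r * (w r - 1)) * (w r - 1)
        + r₀ ^ n * (2 * w r - 1)) atTop (nhds (r₀ ^ n)) := by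
      norm_num at h1 h2 ⊢
      simpa using h1.add h2
    have hden : Tendsto (fun r => ℓ * (w r) ^ 2) atTop (nhds (ℓ * 1 ^ 2)) :=
      tendsto_const_nhds.mul (hW.pow 2)
    have := hnum.div hden (by positivity)
    simp only [one_pow, mul_one] at this
    exact this
  -- eventual equality
  refine Tendsto.congr' ?_ hgl
  filter_upwards [eventually_gt_atTop (max rp 1)] with r hr
  have hr1 : (1 : ℝ) < r := lt_of_le_of_lt (le_max_right _ _) hr
  have hr0 : (0 : ℝ) < r := lt_trans one_pos hr1
  have hrp' : rp < r := lt_of_le_of_lt (le_max_left _ _) hr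
  have hVr := hVpos r hrp'
  have hVe : V r = r ^ 2 / ℓ ^ 2 * w r := hV r hr0
  have hwpos : 0 < w r := by
    by_contra h
    push_neg at h
    have : V r ≤ 0 := by
      rw [hVe]
      exact mul_nonpos_of_nonneg_of_nonpos (by positivity) h
    linarith
  have hrn : r ^ n = r ^ (n - 1) * r := by
    rw [← pow_succ]; congr 1; omega
  have ht : r ^ (n - 1) ≠ 0 := by positivity
  have hw0 : w r ≠ 0 := ne_of_gt hwpos
  have hℓ0 : ℓ ≠ 0 := ne_of_gt hℓ
  have hr0' : r ≠ 0 := ne_of_gt hr0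
  have hwe : w r = 1 + a / r ^ (n - 1) - r₀ ^ n / (r ^ (n - 1) * r) := by
    show (1 + a / r ^ (n - 1) - r₀ ^ n / r ^ n : ℝ) = _
    rw [hrn]
  have hε : r ^ (n - 1) * r * (w r - 1) = a * r - r₀ ^ n := by
    rw [hwe]
    field_simp
    ring
  have step1 : 3 * r ^ 2 / (ℓ ^ 3 * V r) = 3 / (ℓ * w r) := by
    rw [hVe]
    field_simp
  have step2 : r ^ 4 / (ℓ ^ 5 * (V r) ^ 2) = 1 / (ℓ * (w r) ^ 2) := by
    rw [hVe]
    field_simp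
  have main : a * (r * (w r - 1)) * (w r - 1) + r₀ ^ n * (2 * w r - 1)
      = r ^ (n - 1) * r * (3 * w r - 1 - 2 * (w r) ^ 2) + a * r * (w r) ^ 2 := by
    linear_combination (2 * w r - 1) * hε
  show g r = _
  rw [hg]
  simp only
  rw [step1, step2, hrn, main]
  field_simp
end

section
/- Let n ≥ 3 be an integer, ℓ > 0, r₀ > 0, a ∈ ℝ, r₊ > 0, and define V : (0,∞) → ℝ by V(r) = (r²/ℓ²)(1 + a/r^{n−1} − r₀ⁿ/rⁿ), assumed positive on (r₊, ∞). Define 𝓔(r) := [ (n+1)r²/(ℓ³V(r)) − r³V'(r)/(ℓ³V(r)²) − ℓV(r)/r² − (n−2)/ℓ ] − [ (r/ℓ)·(d/dr)( r²/(ℓ²V(r)) + ℓ²V(r)/r² ) ] − [ 3r²/(ℓ³V(r)) − r⁴/(ℓ⁵V(r)²) − 2/ℓ ]. Then lim_{r→∞} rⁿ·𝓔(r) = −r₀ⁿ/ℓ. Consequently, for λ > 0, β > 0, G > 0, the Hamiltonian energy E(g) := (1/(8πℓλ))·(λβ/ℓ)·lim_{r→∞} rⁿ𝓔(r) equals −βr₀ⁿ/(8πℓ³),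 and the Hawking–Horowitz mass E_HH(g) = −λβr₀ⁿ/(16πGℓ²) satisfies E_HH(g) = (λℓ/(2G))·E(g). -/
/-!
Write `V = (r²/ℓ²) W` with `W = 1 + a/r^(n-1) - r₀ⁿ/rⁿ`. Then the three brackets of `𝓔` collapse to
`ℓ 𝓔 = (n-4)/W - W - (n-4) - r W' + 1/W²`, and since `r W' = r₀ⁿ/rⁿ - (n-1)(W-1)` the terms of
order `0` and `1` in `u = W - 1` cancel: `ℓ rⁿ 𝓔 = rⁿ u² ((n-1) + (n-2) u) / W² - r₀ⁿ`.
The `a`-term makes `u` only `O(r^(1-n))`, so `rⁿ u² = O(r^(2-n))`, which still tends to `0` for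
`n ≥ 3`; hence `rⁿ 𝓔 → -r₀ⁿ/ℓ`. The two identities for the energies are then plain algebra.
-/

open Filter Topology

/-- The three brackets are `∇̌ⁱg_{1i}`, `∇̌₁ tr_ğ g` and `(a₁₁ - g₁₁ tr_ğ a)/ℓ`. -/
noncomputable def energyDensity (n ℓ : ℝ) (V : ℝ → ℝ) (r : ℝ) : ℝ :=
  ((n + 1) * r ^ 2 / (ℓ ^ 3 * V r) - r ^ 3 * deriv V r / (ℓ ^ 3 * (V r) ^ 2)
      - ℓ * V r / r ^ 2 - (n - 2) / ℓ)
    - (r / ℓ) * deriv (fun s => s ^ 2 / (ℓ ^ 2 * V s) + ℓ ^ 2 * V s / s ^ 2) r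
    - (3 * r ^ 2 / (ℓ ^ 3 * V r) - r ^ 4 / (ℓ ^ 5 * (V r) ^ 2) - 2 / ℓ)

noncomputable def blackeningFactor (n : ℕ) (a r₀ r : ℝ) : ℝ := 1 + a / r ^ (n - 1) - r₀ ^ n / r ^ n

theorem energyDensity_eq_of_hasDerivAt (n : ℝ) {ℓ r w' : ℝ} {V W : ℝ → ℝ} (hℓ : ℓ ≠ 0)
    (hr : r ≠ 0) (hW : W r ≠ 0) (hVW : V =ᶠ[𝓝 r] fun s => s ^ 2 / ℓ ^ 2 * W s)
    (hW' : HasDerivAt W w' r) :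
    energyDensity n ℓ V r = ((n - 4) / W r - W r - (n - 4) - r * w' + 1 / W r ^ 2) / ℓ := by
  have hV' : HasDerivAt V (2 * r / ℓ ^ 2 * W r + r ^ 2 / ℓ ^ 2 * w') r := by
    refine ((((hasDerivAt_pow 2 r).div_const (ℓ ^ 2)).mul hW').congr_of_eventuallyEq
      hVW).congr_deriv ?_
    ring
  have hsum : (fun s => s ^ 2 / (ℓ ^ 2 * V s) + ℓ ^ 2 * V s / s ^ 2) =ᶠ[𝓝 r]
      fun s => (W s)⁻¹ + W s := by
    filter_upwards [hVW, eventually_ne_nhds hr, hW'.continuousAt.eventually_ne hW]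
      with s hVs hs hWs
    rw [hVs]
    field_simp
  have hderiv : deriv (fun s => s ^ 2 / (ℓ ^ 2 * V s) + ℓ ^ 2 * V s / s ^ 2) r =
      -w' / W r ^ 2 + w' := by
    rw [hsum.deriv_eq, ((hW'.fun_inv hW).fun_add hW').deriv]
  unfold energyDensity
  rw [hV'.deriv, hderiv, hVW.eq_of_nhds]
  field_simp
  ring

theorem hasDerivAt_const_div_pow (c : ℝ) (k : ℕ) {r : ℝ} (hr : r ≠ 0) :
    HasDerivAt (fun s => c / s ^ k) (-(k * c) / r ^ (k + 1)) r := by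
  have h := ((hasDerivAt_pow k r).inv (pow_ne_zero k hr)).const_mul c
  simp only [div_eq_mul_inv]
  refine h.congr_deriv ?_
  rcases k with _ | k
  · simp
  · field_simp
    push_cast
    ring

theorem hasDerivAt_blackeningFactor {n : ℕ} (hn : 1 ≤ n) (a r₀ : ℝ) {r : ℝ} (hr : r ≠ 0) :
    HasDerivAt (blackeningFactor n a r₀)
      ((r₀ ^ n / r ^ n - (n - 1) * (blackeningFactor n a r₀ r - 1)) / r) r := by
  obtain ⟨k, rfl⟩ : ∃ k, n = k + 1 := ⟨n - 1, by omega⟩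
  refine (((hasDerivAt_const r 1).add (hasDerivAt_const_div_pow a k hr)).sub
    (hasDerivAt_const_div_pow (r₀ ^ (k + 1)) (k + 1) hr)).congr_deriv ?_
  simp only [blackeningFactor, Nat.add_sub_cancel]
  field_simp
  push_cast
  ring

theorem pow_mul_energyDensity_eq {n : ℕ} (hn : 1 ≤ n) {ℓ a r₀ r : ℝ} {V : ℝ → ℝ}
    (hℓ : ℓ ≠ 0) (hr : 0 < r) (hW : blackeningFactor n a r₀ r ≠ 0)
    (hV : ∀ s > (0 : ℝ), V s = s ^ 2 / ℓ ^ 2 * blackeningFactor n a r₀ s) :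
    r ^ n * energyDensity n ℓ V r =
      (r ^ n * (blackeningFactor n a r₀ r - 1) ^ 2 *
        ((n - 1) + (n - 2) * (blackeningFactor n a r₀ r - 1)) /
          blackeningFactor n a r₀ r ^ 2 - r₀ ^ n) / ℓ := by
  have hVW : V =ᶠ[𝓝 r] fun s => s ^ 2 / ℓ ^ 2 * blackeningFactor n a r₀ s :=
    eventually_of_mem (Ioi_mem_nhds hr) hV
  rw [energyDensity_eq_of_hasDerivAt n hℓ hr.ne' hW hVW (hasDerivAt_blackeningFactor hn a r₀ hr.ne')]
  field_simp
  ring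

theorem tendsto_blackeningFactor {n : ℕ} (hn : 2 ≤ n) (a r₀ : ℝ) :
    Tendsto (blackeningFactor n a r₀) atTop (𝓝 1) := by
  have h : Tendsto (fun r : ℝ => 1 + a / r ^ (n - 1) - r₀ ^ n / r ^ n) atTop (𝓝 (1 + 0 - 0)) :=
    (tendsto_const_nhds.add (tendsto_const_nhds.div_atTop (tendsto_pow_atTop (by omega)))).sub
      (tendsto_const_nhds.div_atTop (tendsto_pow_atTop (by omega)))
  rw [add_zero, sub_zero] at h
  exact h

theorem tendsto_pow_mul_blackeningFactor_sub_one_sq {n : ℕ} (hn : 3 ≤ n) (a r₀ : ℝ) :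
    Tendsto (fun r => r ^ n * (blackeningFactor n a r₀ r - 1) ^ 2) atTop (𝓝 0) := by
  obtain ⟨k, rfl⟩ : ∃ k, n = k + 3 := ⟨n - 3, by omega⟩
  have h : Tendsto (fun r : ℝ => (a - r₀ ^ (k + 3) / r) ^ 2 / r ^ (k + 1)) atTop (𝓝 0) :=
    ((tendsto_const_nhds.sub (tendsto_const_nhds.div_atTop tendsto_id)).pow 2).div_atTop
      (tendsto_pow_atTop (by omega))
  refine h.congr' ?_
  filter_upwards [eventually_gt_atTop 0] with r hr
  simp only [blackeningFactor, show k + 3 - 1 = k + 2 from rfl]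
  field_simp
  ring

theorem tendsto_pow_mul_energyDensity {n : ℕ} (hn : 3 ≤ n) {ℓ a r₀ : ℝ} {V : ℝ → ℝ}
    (hℓ : ℓ ≠ 0) (hV : ∀ s > (0 : ℝ), V s = s ^ 2 / ℓ ^ 2 * blackeningFactor n a r₀ s) :
    Tendsto (fun r => r ^ n * energyDensity n ℓ V r) atTop (𝓝 (-(r₀ ^ n) / ℓ)) := by
  have hW := tendsto_blackeningFactor (by omega : 2 ≤ n) a r₀
  have hlim : Tendsto (fun r => (r ^ n * (blackeningFactor n a r₀ r - 1) ^ 2 *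
      ((n - 1) + (n - 2) * (blackeningFactor n a r₀ r - 1)) /
        blackeningFactor n a r₀ r ^ 2 - r₀ ^ n) / ℓ) atTop
      (𝓝 ((0 * ((n - 1) + (n - 2) * (1 - 1)) / 1 ^ 2 - r₀ ^ n) / ℓ)) :=
    ((((tendsto_pow_mul_blackeningFactor_sub_one_sq hn a r₀).mul
      (tendsto_const_nhds.add (tendsto_const_nhds.mul (hW.sub_const 1)))).div
        (hW.pow 2) (by norm_num)).sub_const _).div_const ℓ
  rw [zero_mul, zero_div, zero_sub] at hlim
  refine hlim.congr' ?_
  filter_upwards [eventually_gt_atTop 0, hW.eventually_ne one_ne_zero] with r hr hWr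
  exact (pow_mul_energyDensity_eq (by omega) hℓ hr hWr hV).symm

theorem stmt_16_general (n : ℕ) (hn : 3 ≤ n) (ℓ r₀ : ℝ) (hℓ : 0 < ℓ) (a : ℝ)
    (rp : ℝ) (lam β G : ℝ) (hlam : 0 < lam)
    (V : ℝ → ℝ)
    (hV : ∀ r > (0 : ℝ), V r = r ^ 2 / ℓ ^ 2 * (1 + a / r ^ (n - 1) - r₀ ^ n / r ^ n))
    (E : ℝ → ℝ)
    (hE : ∀ r > rp, E r =
      (((n : ℝ) + 1) * r ^ 2 / (ℓ ^ 3 * V r) - r ^ 3 * deriv V r / (ℓ ^ 3 * (V r) ^ 2)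
        - ℓ * V r / r ^ 2 - ((n : ℝ) - 2) / ℓ)
      - (r / ℓ) * deriv (fun s => s ^ 2 / (ℓ ^ 2 * V s) + ℓ ^ 2 * V s / s ^ 2) r
      - (3 * r ^ 2 / (ℓ ^ 3 * V r) - r ^ 4 / (ℓ ^ 5 * (V r) ^ 2) - 2 / ℓ)) :
    Tendsto (fun r => r ^ n * E r) atTop (nhds (-(r₀ ^ n) / ℓ)) ∧
    (1 / (8 * Real.pi * ℓ * lam)) * (lam * β / ℓ) * (-(r₀ ^ n) / ℓ)
      = -(β * r₀ ^ n) / (8 * Real.pi * ℓ ^ 3) ∧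
    -(lam * β * r₀ ^ n) / (16 * Real.pi * G * ℓ ^ 2)
      = (lam * ℓ / (2 * G)) * (-(β * r₀ ^ n) / (8 * Real.pi * ℓ ^ 3)) := by
  refine ⟨?_, by field_simp, by field_simp; ring⟩
  refine (tendsto_pow_mul_energyDensity hn hℓ.ne' hV).congr' ?_
  filter_upwards [eventually_gt_atTop rp] with r hr
  rw [hE r hr]
  rfl

/-- Proposition 4: with the Hamiltonian energy density
𝓔(r) = [∇̌ⁱg_{1i}] − [∇̌₁tr_ğ(g)] − [(1/ℓ)(a₁₁ − g₁₁tr_ğ(a))], one has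
rⁿ𝓔(r) → −r₀ⁿ/ℓ; hence E(g) = (1/(8πℓλ))·(λβ/ℓ)·lim rⁿ𝓔(r) = −βr₀ⁿ/(8πℓ³)
and E_HH(g) = −λβr₀ⁿ/(16πGℓ²) = (λℓ/(2G))·E(g). -/
theorem stmt_16 (n : ℕ) (hn : 3 ≤ n) (ℓ r₀ : ℝ) (hℓ : 0 < ℓ) (hr₀ : 0 < r₀) (a : ℝ)
    (rp : ℝ) (hrp : 0 < rp) (lam β G : ℝ) (hlam : 0 < lam) (hβ : 0 < β) (hG : 0 < G)
    (V : ℝ → ℝ)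
    (hV : ∀ r > (0 : ℝ), V r = r ^ 2 / ℓ ^ 2 * (1 + a / r ^ (n - 1) - r₀ ^ n / r ^ n))
    (hVpos : ∀ r > rp, 0 < V r)
    (E : ℝ → ℝ)
    (hE : ∀ r > rp, E r =
      (((n : ℝ) + 1) * r ^ 2 / (ℓ ^ 3 * V r) - r ^ 3 * deriv V r / (ℓ ^ 3 * (V r) ^ 2)
        - ℓ * V r / r ^ 2 - ((n : ℝ) - 2) / ℓ)
      - (r / ℓ) * deriv (fun s => s ^ 2 / (ℓ ^ 2 * V s) + ℓ ^ 2 * V s / s ^ 2) r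
      - (3 * r ^ 2 / (ℓ ^ 3 * V r) - r ^ 4 / (ℓ ^ 5 * (V r) ^ 2) - 2 / ℓ)) :
    Tendsto (fun r => r ^ n * E r) atTop (nhds (-(r₀ ^ n) / ℓ)) ∧
    (1 / (8 * Real.pi * ℓ * lam)) * (lam * β / ℓ) * (-(r₀ ^ n) / ℓ)
      = -(β * r₀ ^ n) / (8 * Real.pi * ℓ ^ 3) ∧
    -(lam * β * r₀ ^ n) / (16 * Real.pi * G * ℓ ^ 2)
      = (lam * ℓ / (2 * G)) * (-(β * r₀ ^ n) / (8 * Real.pi * ℓ ^ 3)) :=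
  stmt_16_general n hn ℓ r₀ hℓ a rp lam β G hlam V hV E hE
end

section
/- Let n ≥ 3 be an integer, r₀ > 0, r₊ > 0, λ > 0, G > 0, and set r̄₀ := (r₊/n)·(n − 1 + r₀ⁿ/r₊ⁿ). Define E_HH(g) := −λr₀ⁿ/(4G·r₊·(n − 1 + r₀ⁿ/r₊ⁿ)) and E_HH(g_HM) := −λr̄₀^{n−1}/(4G·n). Then the identity E_HH(g) = ( n·(r₀/r₊) / (n − 1 + (r₀/r₊)ⁿ) )ⁿ · E_HH(g_HM) holds, and consequently E_HH(g) ≥ E_HH(g_HM), with equality if and only if r₊ = r₀. -/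
/-!
Writing `x = r₀ / r₊` and `D = n - 1 + xⁿ`, both masses are negative multiples of `λ / G`, and
their quotient is `(n x / D)ⁿ`. Bernoulli's inequality `xⁿ ≥ 1 + n (x - 1)`, strict for `x ≠ 1`
when `n ≥ 2`, says exactly that `0 < n x / D ≤ 1` with equality only at `x = 1`; multiplying the
negative mass `E_HH(g_HM)` by a number in `(0, 1]` can only increase it.
-/

theorem one_add_mul_sub_lt_pow {R : Type*} [Field R] [LinearOrder R] [IsStrictOrderedRing R]
    {a : R} (ha : 0 ≤ a) (ha₁ : a ≠ 1) {n : ℕ} (hn : 2 ≤ n) : 1 + n * (a - 1) < a ^ n := by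
  obtain ⟨m, rfl⟩ : ∃ m, n = m + 1 := ⟨n - 1, by omega⟩
  have hm : (1 : R) ≤ m := by exact_mod_cast (by omega : 1 ≤ m)
  have hsq : 0 < (a - 1) ^ 2 := sq_pos_of_ne_zero (sub_ne_zero.mpr ha₁)
  -- `a ^ (m + 1) = a * a ^ m ≥ a * (1 + m (a - 1)) = 1 + (m + 1) (a - 1) + m (a - 1) ^ 2`
  have hbern : a * (1 + m * (a - 1)) ≤ a * a ^ m :=
    mul_le_mul_of_nonneg_left (one_add_mul_sub_le_pow (by linarith) m) ha
  push_cast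
  rw [pow_succ']
  nlinarith

noncomputable def massRatio (n : ℕ) (x : ℝ) : ℝ :=
  n * x / (n - 1 + x ^ n)

theorem massRatio_denom_pos {n : ℕ} (hn : 1 ≤ n) {x : ℝ} (hx : 0 < x) :
    0 < (n : ℝ) - 1 + x ^ n := by
  have : (1 : ℝ) ≤ n := by exact_mod_cast hn
  linarith [pow_pos hx n]

theorem massRatio_pos {n : ℕ} (hn : 1 ≤ n) {x : ℝ} (hx : 0 < x) : 0 < massRatio n x := by
  have : (0 : ℝ) < n := by exact_mod_cast hn
  exact div_pos (mul_pos this hx) (massRatio_denom_pos hn hx)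

theorem massRatio_le_one {n : ℕ} (hn : 1 ≤ n) {x : ℝ} (hx : 0 < x) : massRatio n x ≤ 1 := by
  rw [massRatio, div_le_one (massRatio_denom_pos hn hx)]
  linarith [one_add_mul_sub_le_pow (by linarith : (-1 : ℝ) ≤ x) n]

theorem massRatio_lt_one {n : ℕ} (hn : 2 ≤ n) {x : ℝ} (hx : 0 < x) (hx₁ : x ≠ 1) :
    massRatio n x < 1 := by
  rw [massRatio, div_lt_one (massRatio_denom_pos (by omega) hx)]
  linarith [one_add_mul_sub_lt_pow hx.le hx₁ hn]

theorem massRatio_one {n : ℕ} (hn : n ≠ 0) : massRatio n 1 = 1 := by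
  have : (n : ℝ) ≠ 0 := by exact_mod_cast hn
  simp [massRatio, this]

theorem massRatio_eq_one_iff {n : ℕ} (hn : 2 ≤ n) {x : ℝ} (hx : 0 < x) :
    massRatio n x = 1 ↔ x = 1 :=
  ⟨fun h => by_contra fun hx₁ => (massRatio_lt_one hn hx hx₁).ne h,
    fun h => by rw [h, massRatio_one (by omega)]⟩

theorem hawkingHorowitz_mass_eq_pow_mul {n : ℕ} (hn : n ≠ 0) {x rp lam G D : ℝ}
    (hrp : rp ≠ 0) (hG : G ≠ 0) (hD : D ≠ 0) :
    -(lam * (x * rp) ^ n) / (4 * G * rp * D) =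
      (n * x / D) ^ n * (-(lam * (rp / n * D) ^ (n - 1)) / (4 * G * n)) := by
  obtain ⟨m, rfl⟩ : ∃ m, n = m + 1 := ⟨n - 1, by omega⟩
  have hm : (m : ℝ) + 1 ≠ 0 := by positivity
  rw [Nat.add_sub_cancel]
  simp only [div_pow, mul_pow]
  push_cast
  field_simp
  ring

/-- positive energy comparison: with r̄₀ = (r₊/n)(n − 1 + r₀ⁿ/r₊ⁿ),
E_HH(g) = −λr₀ⁿ/(4Gr₊(n−1+r₀ⁿ/r₊ⁿ)) and E_HH(g_HM) = −λr̄₀^{n−1}/(4Gn) satisfy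
E_HH(g) = (n(r₀/r₊)/(n−1+(r₀/r₊)ⁿ))ⁿ · E_HH(g_HM) and E_HH(g) ≥ E_HH(g_HM),
with equality iff r₊ = r₀. -/
theorem stmt_19 (n : ℕ) (hn : 3 ≤ n) (r₀ rp lam G : ℝ)
    (hr₀ : 0 < r₀) (hrp : 0 < rp) (hlam : 0 < lam) (hG : 0 < G)
    (rbar : ℝ) (hrbar : rbar = rp / n * ((n : ℝ) - 1 + r₀ ^ n / rp ^ n))
    (EHHg EHHhm : ℝ)
    (hEHHg : EHHg = -(lam * r₀ ^ n) / (4 * G * rp * ((n : ℝ) - 1 + r₀ ^ n / rp ^ n)))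
    (hEHHhm : EHHhm = -(lam * rbar ^ (n - 1)) / (4 * G * n)) :
    EHHg = ((n : ℝ) * (r₀ / rp) / ((n : ℝ) - 1 + (r₀ / rp) ^ n)) ^ n * EHHhm ∧
    EHHg ≥ EHHhm ∧
    (EHHg = EHHhm ↔ rp = r₀) := by
  have hx : 0 < r₀ / rp := div_pos hr₀ hrp
  have hD := massRatio_denom_pos (by omega : 1 ≤ n) hx
  rw [← div_pow] at hrbar hEHHg
  have hHM_neg : EHHhm < 0 := by
    have : 0 < rbar := hrbar ▸ by positivity
    rw [hEHHhm, neg_div, neg_lt_zero]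
    positivity
  have hmass : EHHg = massRatio n (r₀ / rp) ^ n * EHHhm := by
    have := hawkingHorowitz_mass_eq_pow_mul (n := n) (x := r₀ / rp) (lam := lam)
      (by omega) hrp.ne' hG.ne' hD.ne'
    rwa [div_mul_cancel₀ r₀ hrp.ne', ← hEHHg, ← hrbar, ← hEHHhm] at this
  have hc₀ := (massRatio_pos (by omega : 1 ≤ n) hx).le
  refine ⟨hmass, ?_, ?_⟩
  · rw [hmass]
    exact le_mul_of_le_one_left hHM_neg.le (pow_le_one₀ hc₀ (massRatio_le_one (by omega) hx))
  · rw [hmass, mul_eq_right₀ hHM_neg.ne, pow_eq_one_iff_of_nonneg hc₀ (by omega),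
      massRatio_eq_one_iff (by omega) hx, div_eq_one_iff_eq hrp.ne', eq_comm]
end
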